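/- arXiv:math/0201137 — 4 statements merged into one kernel-verified Lean document; each statement's English description precedes it below -/
import Mathlib

section
/- Let A be an algebra over a field F and φ : A → A a linear map. Then there exists a unique family of multilinear maps, indexed by k-tuples of nonnegative integers (n₁,…,n_k), sending (a₁,…,a_k) ∈ A^k to [n₁,…,n_k; a₁,…,a_k] ∈ A, satisfying: (MP1) φ([n₁,…,n_k; a₁,…,a_k]) = [n₁+1,…,n_k+1; a₁,…,a_k], and (MP2) whenever n_ℓ = 0, [n₁,…,n_k; a₁,…,a_k] = [n₁,…,n_{ℓ-1}; a₁,…,a_{ℓ-1}] · a_ℓ · [n_{ℓ+1},…,n_k; a_{ℓ+1},…,a_k] (with the convention that an empty bracket is omitted). -/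
/-- A family of "moment polynomials" for a linear map `φ : A → A`:
maps indexed by tuples of nonnegative integers (encoded as lists), multilinear
in the algebra entries, satisfying the axioms MP1 and MP2 of Arveson. -/
structure MomentFamily (F : Type*) {A : Type*} [Field F] [Ring A] [Algebra F A]
    (φ : A →ₗ[F] A) where
  M : List ℕ → List A → A
  map_add : ∀ (ns : List ℕ) (xs : List A) (a b : A) (ys : List A),
    (xs ++ a :: ys).length = ns.length →
    M ns (xs ++ (a + b) :: ys) = M ns (xs ++ a :: ys) + M ns (xs ++ b :: ys)
  map_smul : ∀ (ns : List ℕ) (xs : List A) (c : F) (a : A) (ys : List A),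
    (xs ++ a :: ys).length = ns.length →
    M ns (xs ++ (c • a) :: ys) = c • M ns (xs ++ a :: ys)
  mp1 : ∀ (ns : List ℕ) (as : List A), as.length = ns.length →
    φ (M ns as) = M (ns.map (· + 1)) as
  mp2_single : ∀ a : A, M [0] [a] = a
  mp2_left : ∀ (ns : List ℕ) (a : A) (as : List A), ns ≠ [] → as.length = ns.length →
    M (0 :: ns) (a :: as) = a * M ns as
  mp2_right : ∀ (ns : List ℕ) (a : A) (as : List A), ns ≠ [] → as.length = ns.length →
    M (ns ++ [0]) (as ++ [a]) = M ns as * a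
  mp2_mid : ∀ (ns ms : List ℕ) (a : A) (as bs : List A), ns ≠ [] → ms ≠ [] →
    as.length = ns.length → bs.length = ms.length →
    M (ns ++ 0 :: ms) (as ++ a :: bs) = M ns as * a * M ms bs

/-!
MP1 and MP2 determine every bracket recursively: if some index is zero, MP2 splits the bracket
there into two shorter ones; otherwise all indices are positive and MP1 writes it as `φ` of the
bracket with every index lowered by one. Both moves decrease `length + sum`, which gives
uniqueness. For existence, take this recursion (splitting at the first zero) as the definition;
MP2 at an arbitrary zero then follows by associativity of the product, and multilinearity by the
same induction, since each step composes with `φ` or with a left or right multiplication.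
-/

namespace List

variable {α : Type*}

lemma exists_eq_append_cons_of_lt_length {l : List α} {n : ℕ} (h : n < l.length) :
    ∃ l₁ a l₂, l = l₁ ++ a :: l₂ ∧ l₁.length = n :=
  ⟨l.take n, l[n], l.drop (n + 1), by rw [getElem_cons_drop, take_append_drop],
    by simp only [length_take]; omega⟩

lemma map_sub_one_map_add_one {l : List ℕ} (h : 0 ∉ l) : (l.map (· - 1)).map (· + 1) = l := by
  rw [map_map, map_congr_left (g := id) fun n hn => ?_, map_id]
  have : n ≠ 0 := fun h' => h (h' ▸ hn)
  simp only [Function.comp_apply, id_eq]; omega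

lemma length_add_sum_map_sub_one_lt {l : List ℕ} (hne : l ≠ []) (h0 : 0 ∉ l) :
    (l.map (· - 1)).length + (l.map (· - 1)).sum < l.length + l.sum := by
  have hsum : (l.map (· - 1)).sum + l.length = l.sum := by
    conv_rhs => rw [← map_sub_one_map_add_one h0]
    simp [Function.comp_def, sum_map_add]
  have := length_pos_iff.mpr hne
  simp only [length_map]
  omega

lemma length_add_sum_lt_of_sublist {l₁ l₂ : List ℕ} (hs : l₁ <+ l₂)
    (hl : l₁.length < l₂.length) :
    l₁.length + l₁.sum < l₂.length + l₂.sum := by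
  have := hs.sum_le_sum fun _ _ => Nat.zero_le _
  omega

end List

section MomentPolynomial

variable {A : Type*} [MonoidWithZero A]

/-- The empty tuple gets the value `1`, so that an omitted bracket in MP2 is a factor `1`. -/
def momentPolynomial (φ : A → A) (ns : List ℕ) (as : List A) : A :=
  if hne : ns = [] then 1
  else if h0 : 0 ∈ ns then
    momentPolynomial φ (ns.take (ns.idxOf 0)) (as.take (ns.idxOf 0)) * as.getD (ns.idxOf 0) 0 *
      momentPolynomial φ (ns.drop (ns.idxOf 0 + 1)) (as.drop (ns.idxOf 0 + 1))
  else φ (momentPolynomial φ (ns.map (· - 1)) as)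
termination_by ns.length + ns.sum
decreasing_by
  · exact List.length_add_sum_lt_of_sublist (List.take_sublist _ _)
      (by simp [List.idxOf_lt_length_iff.mpr h0])
  · exact List.length_add_sum_lt_of_sublist (List.drop_sublist _ _)
      (by grind)
  · simp only [List.map_attach_eq_pmap, List.pmap_eq_map]
    exact List.length_add_sum_map_sub_one_lt hne h0

variable (φ : A → A)

@[simp]
lemma momentPolynomial_nil (as : List A) : momentPolynomial φ [] as = 1 := by
  rw [momentPolynomial, dif_pos rfl]

lemma momentPolynomial_of_zero_notMem {ns : List ℕ} (hne : ns ≠ []) (h0 : 0 ∉ ns)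
    (as : List A) :
    momentPolynomial φ ns as = φ (momentPolynomial φ (ns.map (· - 1)) as) := by
  rw [momentPolynomial, dif_neg hne, dif_neg h0]

lemma momentPolynomial_map_add_one {ns : List ℕ} (hne : ns ≠ []) (as : List A) :
    momentPolynomial φ (ns.map (· + 1)) as = φ (momentPolynomial φ ns as) := by
  rw [momentPolynomial_of_zero_notMem φ (by simpa using hne) (by simp), List.map_map]
  simp [Function.comp_def]

theorem momentPolynomial_append_zero_append (p q : List ℕ) {as : List A} (a : A) (bs : List A)
    (hlen : as.length = p.length) :
    momentPolynomial φ (p ++ 0 :: q) (as ++ a :: bs) =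
      momentPolynomial φ p as * a * momentPolynomial φ q bs := by
  by_cases h0 : 0 ∈ p
  · obtain ⟨p₁, p₂, rfl⟩ := List.append_of_mem h0
    obtain ⟨as₁, m, as₂, rfl, h₁⟩ :=
      List.exists_eq_append_cons_of_lt_length (l := as) (n := p₁.length) (by grind)
    have h₂ : as₂.length = p₂.length := by grind
    have e₁ := momentPolynomial_append_zero_append p₁ (p₂ ++ 0 :: q) m (as₂ ++ a :: bs) h₁
    have e₂ := momentPolynomial_append_zero_append p₂ q a bs h₂
    have e₃ := momentPolynomial_append_zero_append p₁ p₂ m as₂ h₁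
    simp only [List.append_assoc, List.cons_append] at e₁ ⊢
    rw [e₁, e₂, e₃]
    simp only [mul_assoc]
  · have hi : (p ++ 0 :: q).idxOf 0 = p.length := by simp [List.idxOf_append_of_notMem h0]
    rw [momentPolynomial, dif_neg (by simp), dif_pos (by simp), hi]
    simp [List.drop_append, List.drop_eq_nil_of_le, hlen]
termination_by p.length + p.sum
decreasing_by all_goals grind

end MomentPolynomial

section Linearity

variable {R A : Type*} [CommSemiring R] [Semiring A] [Algebra R A] (φ : A →ₗ[R] A)

theorem isLinearMap_momentPolynomial (ns : List ℕ) (xs ys : List A)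
    (hlen : ns.length = xs.length + ys.length + 1) :
    IsLinearMap R fun a => momentPolynomial φ ns (xs ++ a :: ys) := by
  by_cases h0 : 0 ∈ ns
  · obtain ⟨p, q, rfl⟩ := List.append_of_mem h0
    simp only [List.length_append, List.length_cons] at hlen
    rcases lt_trichotomy xs.length p.length with hlt | heq | hgt
    · obtain ⟨ys₁, m, ys₂, rfl, h₁⟩ :=
        List.exists_eq_append_cons_of_lt_length (l := ys) (n := p.length - xs.length - 1) (by omega)
      have hsplit : ∀ a, momentPolynomial φ (p ++ 0 :: q) (xs ++ a :: (ys₁ ++ m :: ys₂)) =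
          momentPolynomial φ p (xs ++ a :: ys₁) * (m * momentPolynomial φ q ys₂) := by
        intro a
        rw [← mul_assoc, ← momentPolynomial_append_zero_append _ _ _ _ _ (by grind)]
        simp
      simp only [hsplit]
      exact (LinearMap.mulRight R _ ∘ₗ IsLinearMap.mk' _
        (isLinearMap_momentPolynomial p xs ys₁ (by grind))).isLinear
    · simp only [momentPolynomial_append_zero_append _ _ _ _ _ heq]
      exact (LinearMap.mulLeftRight R (_, _)).isLinear
    · obtain ⟨xs₁, m, xs₂, rfl, h₁⟩ := List.exists_eq_append_cons_of_lt_length hgt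
      have hsplit : ∀ a, momentPolynomial φ (p ++ 0 :: q) (xs₁ ++ m :: xs₂ ++ a :: ys) =
          momentPolynomial φ p xs₁ * m * momentPolynomial φ q (xs₂ ++ a :: ys) := by
        intro a
        rw [← momentPolynomial_append_zero_append _ _ _ _ _ h₁]
        simp
      simp only [hsplit]
      exact (LinearMap.mulLeft R _ ∘ₗ IsLinearMap.mk' _
        (isLinearMap_momentPolynomial q xs₂ ys (by grind))).isLinear
  · have hne : ns ≠ [] := by rintro rfl; simp at hlen
    simp only [momentPolynomial_of_zero_notMem _ hne h0]
    exact (φ ∘ₗ IsLinearMap.mk' _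
      (isLinearMap_momentPolynomial (ns.map (· - 1)) xs ys (by simpa using hlen))).isLinear
termination_by ns.length + ns.sum
decreasing_by
  all_goals first
    | exact List.length_add_sum_map_sub_one_lt hne h0
    | grind

end Linearity

section Existence

variable {F A : Type*} [Field F] [Ring A] [Algebra F A]

/-- The empty tuple is sent to `0`, since MP1 forces its value to be a fixed point of `φ`. -/
def momentFamily (φ : A →ₗ[F] A) : MomentFamily F φ where
  M ns as := if ns = [] then 0 else momentPolynomial φ ns as
  map_add ns xs a b ys h := by
    have hne : ns ≠ [] := by rintro rfl; simp at h
    simp only [if_neg hne]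
    exact (isLinearMap_momentPolynomial φ ns xs ys (by grind)).map_add a b
  map_smul ns xs c a ys h := by
    have hne : ns ≠ [] := by rintro rfl; simp at h
    simp only [if_neg hne]
    exact (isLinearMap_momentPolynomial φ ns xs ys (by grind)).map_smul c a
  mp1 ns as _ := by
    rcases eq_or_ne ns [] with rfl | hne
    · simp
    · simp [hne, momentPolynomial_map_add_one]
  mp2_single a := by simpa using momentPolynomial_append_zero_append φ [] [] (as := []) a [] rfl
  mp2_left ns a as hne _ := by
    simpa [hne] using momentPolynomial_append_zero_append φ [] ns (as := []) a as rfl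
  mp2_right ns a as hne hlen := by
    simpa [hne] using momentPolynomial_append_zero_append φ ns [] a [] hlen
  mp2_mid ns ms a as bs hne hme hlen _ := by
    simpa [hne, hme] using momentPolynomial_append_zero_append φ ns ms a bs hlen

end Existence

namespace MomentFamily

variable {F A : Type*} [Field F] [Ring A] [Algebra F A] {φ : A →ₗ[F] A}
  (Φ : MomentFamily F φ)

def bracket (ns : List ℕ) (as : List A) : A := if ns = [] then 1 else Φ.M ns as

lemma M_append_zero_append {p q : List ℕ} {as bs : List A} (a : A)
    (hp : as.length = p.length) (hq : bs.length = q.length) :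
    Φ.M (p ++ 0 :: q) (as ++ a :: bs) = Φ.bracket p as * a * Φ.bracket q bs := by
  rcases eq_or_ne p [] with rfl | hp₀ <;> rcases eq_or_ne q [] with rfl | hq₀
  · obtain rfl := List.length_eq_zero_iff.mp hp
    obtain rfl := List.length_eq_zero_iff.mp hq
    simpa [bracket] using Φ.mp2_single a
  · obtain rfl := List.length_eq_zero_iff.mp hp
    simpa [bracket, hq₀] using Φ.mp2_left q a bs hq₀ hq
  · obtain rfl := List.length_eq_zero_iff.mp hq
    simpa [bracket, hp₀] using Φ.mp2_right p a as hp₀ hp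
  · simpa [bracket, hp₀, hq₀] using Φ.mp2_mid p q a as bs hp₀ hq₀ hp hq

theorem bracket_eq_momentPolynomial (ns : List ℕ) (as : List A) (hlen : as.length = ns.length) :
    Φ.bracket ns as = momentPolynomial φ ns as := by
  rcases eq_or_ne ns [] with rfl | hne
  · simp [bracket]
  by_cases h0 : 0 ∈ ns
  · obtain ⟨p, q, rfl⟩ := List.append_of_mem h0
    obtain ⟨as₁, a, as₂, rfl, h₁⟩ :=
      List.exists_eq_append_cons_of_lt_length (l := as) (n := p.length) (by simp [hlen])
    have h₂ : as₂.length = q.length := by grind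
    rw [bracket, if_neg hne, M_append_zero_append Φ a h₁ h₂,
      momentPolynomial_append_zero_append _ _ _ _ _ h₁,
      bracket_eq_momentPolynomial p as₁ h₁, bracket_eq_momentPolynomial q as₂ h₂]
  · have hne' : ns.map (· - 1) ≠ [] := by simpa using hne
    have hlen' : as.length = (ns.map (· - 1)).length := by simpa using hlen
    rw [bracket, if_neg hne, ← List.map_sub_one_map_add_one h0, ← Φ.mp1 _ _ hlen',
      momentPolynomial_map_add_one _ hne', ← bracket_eq_momentPolynomial _ as hlen', bracket,
      if_neg hne']
termination_by ns.length + ns.sum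
decreasing_by
  all_goals first
    | exact List.length_add_sum_map_sub_one_lt hne h0
    | grind

theorem M_eq_momentPolynomial {ns : List ℕ} {as : List A} (hne : ns ≠ [])
    (hlen : as.length = ns.length) : Φ.M ns as = momentPolynomial φ ns as := by
  simpa [bracket, hne] using Φ.bracket_eq_momentPolynomial ns as hlen

end MomentFamily

/-- Existence and uniqueness of the moment polynomials of a linear map
`φ : A → A` on an algebra `A` over a field `F`. -/
theorem moment_polynomials_exist_unique (F : Type*) {A : Type*} [Field F] [Ring A]
    [Algebra F A] (φ : A →ₗ[F] A) :
    (∃ _ : MomentFamily F φ, True) ∧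
      ∀ (Φ Ψ : MomentFamily F φ) (ns : List ℕ) (as : List A),
        ns ≠ [] → as.length = ns.length → Φ.M ns as = Ψ.M ns as := by
  refine ⟨⟨momentFamily φ, trivial⟩, fun Φ Ψ ns as hne hlen => ?_⟩
  rw [Φ.M_eq_momentPolynomial hne hlen, Ψ.M_eq_momentPolynomial hne hlen]
end

section
/- Let A ⊆ B be C*-algebras and E : B → A a conditional expectation (idempotent positive linear map onto A with E(ax) = aE(x) and E(xa) = E(x)a for a ∈ A, x ∈ B) whose restriction to the hereditary subalgebra [ABA] generated by A is multiplicative. Then E(x a y) = E(x) a E(y) for all x, y ∈ B and a ∈ A. -/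
open scoped ComplexOrder

variable {B : Type*} [NonUnitalNormedRing B] [StarRing B] [CStarRing B]
  [NormedSpace ℂ B] [IsScalarTower ℂ B B] [SMulCommClass ℂ B B] [StarModule ℂ B]
  [CompleteSpace B] [PartialOrder B] [StarOrderedRing B]

/-- The hereditary subalgebra `[ABA]` generated by `A` in `B`: the closed linear
span of `{a x b : a, b ∈ A, x ∈ B}`. -/
def hereditarySpan (A : NonUnitalStarSubalgebra ℂ B) : Set B :=
  closure (Submodule.span ℂ {z : B | ∃ a ∈ A, ∃ b ∈ A, ∃ x : B, z = a * x * b} : Set B)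

/-- A conditional expectation of `B` onto the C*-subalgebra `A`: an idempotent
positive `A`-bimodule map with range `A`. -/
def IsCondExp (A : NonUnitalStarSubalgebra ℂ B) (E : B →L[ℂ] B) : Prop :=
  (∀ x, E x ∈ A) ∧ (∀ a ∈ A, E a = a) ∧ (∀ x : B, 0 ≤ x → 0 ≤ E x) ∧
  (∀ a ∈ A, ∀ x, E (a * x) = a * E x) ∧ (∀ a ∈ A, ∀ x, E (x * a) = E x * a)

/-! Let `e` run through an approximate unit of the closed C*-subalgebra `A`. As `e x a` and
`e y e` lie in `[ABA]`, multiplicativity and the bimodule property give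
`e E(x a e y) e = e E(x) a e E(y) e`; as `e → 1`, the left side tends to `E(x a y)` and the right
side to `E(x) a E(y)`. -/

open Filter Topology

section NormedRing

variable {ι R : Type*} [NonUnitalSeminormedRing R] {l : Filter ι} {e u : ι → R} {x : R}

theorem Filter.Tendsto.mul_left_of_isBoundedUnder (hu : Tendsto u l (𝓝 x))
    (he : IsBoundedUnder (· ≤ ·) l (‖e ·‖)) (hx : Tendsto (e · * x) l (𝓝 x)) :
    Tendsto (fun i => e i * u i) l (𝓝 x) := by
  have h := (isBoundedUnder_le_mul_tendsto_zero he (tendsto_sub_nhds_zero_iff.2 hu)).add hx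
  simpa only [mul_sub, sub_add_cancel, zero_add] using h

theorem Filter.Tendsto.mul_right_of_isBoundedUnder (hu : Tendsto u l (𝓝 x))
    (he : IsBoundedUnder (· ≤ ·) l (‖e ·‖)) (hx : Tendsto (x * e ·) l (𝓝 x)) :
    Tendsto (fun i => u i * e i) l (𝓝 x) := by
  have h := ((tendsto_sub_nhds_zero_iff.2 hu).zero_mul_isBoundedUnder_le he).add hx
  simpa only [sub_mul, sub_add_cancel, zero_add] using h

theorem Filter.Tendsto.conj_of_isBoundedUnder (hu : Tendsto u l (𝓝 x))
    (he : IsBoundedUnder (· ≤ ·) l (‖e ·‖)) (hxl : Tendsto (e · * x) l (𝓝 x))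
    (hxr : Tendsto (x * e ·) l (𝓝 x)) : Tendsto (fun i => e i * u i * e i) l (𝓝 x) :=
  (hu.mul_left_of_isBoundedUnder he hxl).mul_right_of_isBoundedUnder he hxr

end NormedRing

theorem NonUnitalStarSubalgebra.exists_approximateUnit_of_isClosed {C : Type*}
    [NonUnitalCStarAlgebra C] (A : NonUnitalStarSubalgebra ℂ C) [IsClosed (A : Set C)] :
    ∃ l : Filter C, l.NeBot ∧ (∀ᶠ e in l, e ∈ A ∧ ‖e‖ ≤ 1) ∧
      ∀ m ∈ A, Tendsto (· * m) l (𝓝 m) ∧ Tendsto (m * ·) l (𝓝 m) := by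
  let _ := CStarAlgebra.spectralOrder A
  let _ := CStarAlgebra.spectralOrderedRing A
  have hl := CStarAlgebra.increasingApproximateUnit A
  refine ⟨(CStarAlgebra.approximateUnit A).map (↑), inferInstance, ?_,
    fun m hm => ⟨?_, ?_⟩⟩
  · exact eventually_map.2 (hl.eventually_norm.mono fun e he => ⟨e.2, he⟩)
  · exact (continuous_subtype_val.tendsto _).comp (hl.tendsto_mul_right ⟨m, hm⟩)
  · exact (continuous_subtype_val.tendsto _).comp (hl.tendsto_mul_left ⟨m, hm⟩)

omit [CStarRing B] [IsScalarTower ℂ B B] [SMulCommClass ℂ B B] [StarModule ℂ B]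
  [CompleteSpace B] [StarOrderedRing B] in
theorem IsCondExp.apply_mul_mul {A : NonUnitalStarSubalgebra ℂ B} {E : B →L[ℂ] B}
    (hE : IsCondExp A E) {b c : B} (hb : b ∈ A) (hc : c ∈ A) (z : B) :
    E (b * z * c) = b * E z * c := by
  rw [hE.2.2.2.2 c hc, hE.2.2.2.1 b hb]

omit [CStarRing B] [IsScalarTower ℂ B B] [SMulCommClass ℂ B B] [StarModule ℂ B]
  [CompleteSpace B] [PartialOrder B] [StarOrderedRing B] in
theorem mem_hereditarySpan {A : NonUnitalStarSubalgebra ℂ B} {b c : B} (hb : b ∈ A)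
    (hc : c ∈ A) (z : B) : b * z * c ∈ hereditarySpan A :=
  subset_closure (Submodule.subset_span ⟨b, hb, c, hc, z, rfl⟩)

/-- If a conditional expectation `E : B → A` is multiplicative on the hereditary
subalgebra `[ABA]` generated by `A`, then `E(x a y) = E(x) a E(y)` for all
`x, y ∈ B` and `a ∈ A`. -/
theorem condExp_mult_sandwich (A : NonUnitalStarSubalgebra ℂ B)
    (hA : IsClosed (A : Set B)) (E : B →L[ℂ] B) (hE : IsCondExp A E)
    (hmult : ∀ x ∈ hereditarySpan A, ∀ y ∈ hereditarySpan A, E (x * y) = E x * E y) :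
    ∀ (x y : B), ∀ a ∈ A, E (x * a * y) = E x * a * E y := by
  intro x y a ha
  let _ : NonUnitalCStarAlgebra B := {}
  obtain ⟨l, hl, hunit, happrox⟩ := A.exists_approximateUnit_of_isClosed
  have hbdd : IsBoundedUnder (· ≤ ·) l (‖·‖) :=
    isBoundedUnder_of_eventually_le (hunit.mono fun _ => And.right)
  have hcompress : ∀ᶠ e in l, e * E (x * (a * e) * y) * e = e * E x * a * (e * E y * e) := by
    filter_upwards [hunit] with e he
    calc e * E (x * (a * e) * y) * e = E (e * (x * (a * e) * y) * e) :=
          (hE.apply_mul_mul he.1 he.1 _).symm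
      _ = E ((e * x * a) * (e * y * e)) := by simp only [mul_assoc]
      _ = E (e * x * a) * E (e * y * e) :=
          hmult _ (mem_hereditarySpan he.1 ha x) _ (mem_hereditarySpan he.1 he.1 y)
      _ = e * E x * a * (e * E y * e) := by
          rw [hE.apply_mul_mul he.1 ha, hE.apply_mul_mul he.1 he.1]
  have hlhs : Tendsto (fun e => e * E (x * (a * e) * y) * e) l (𝓝 (E (x * a * y))) := by
    have hinner := (E.continuous.tendsto _).comp (((happrox a ha).2.const_mul x).mul_const y)
    exact hinner.conj_of_isBoundedUnder hbdd (happrox _ (hE.1 _)).1 (happrox _ (hE.1 _)).2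
  have hrhs : Tendsto (fun e => e * E x * a * (e * E y * e)) l (𝓝 (E x * a * E y)) :=
    ((happrox _ (hE.1 x)).1.mul_const a).mul <| tendsto_const_nhds.conj_of_isBoundedUnder
      hbdd (happrox _ (hE.1 y)).1 (happrox _ (hE.1 y)).2
  exact tendsto_nhds_unique (hlhs.congr' hcompress) hrhs
end

section
/- Let A ⊆ B be C*-algebras, (i,B,α) an A-dynamical system, φ : A → A a contractive completely positive map, and E : B → A an α-expectation with E(α(a)) = φ(a) for a ∈ A. Then for all k ≥ 1, nonnegative integers n₁,…,n_k, and a₁,…,a_k ∈ A, E(α^{n₁}(a₁) α^{n₂}(a₂) ⋯ α^{n_k}(a_k)) = [n₁,…,n_k; a₁,…,a_k], the moment polynomial of φ. In particular, there is at most one α-expectation E with E(α(a)) = φ(a). -/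
open scoped ComplexOrder

variable {B : Type*} [NonUnitalNormedRing B] [StarRing B] [CStarRing B]
  [NormedSpace ℂ B] [IsScalarTower ℂ B B] [SMulCommClass ℂ B B] [StarModule ℂ B]
  [CompleteSpace B] [PartialOrder B] [StarOrderedRing B]

/-- The product `α^{n₁}(a₁) ⋯ α^{n_k}(a_k)` associated to a list of pairs
`(nᵢ, aᵢ)` (and `0` for the empty list). -/
def prodOf (α : B → B) : List (ℕ × B) → B
  | [] => 0
  | p :: rest => rest.foldl (fun acc q => acc * (α^[q.1] q.2)) (α^[p.1] p.2)

/-- `(A, B, α)` is an `A`-dynamical system: `B` is the closed linear span of the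
finite products `α^{n₁}(a₁) ⋯ α^{n_k}(a_k)` with `aᵢ ∈ A`, `nᵢ ≥ 0`. -/
def IsDynSystem (A : NonUnitalStarSubalgebra ℂ B) (α : B →⋆ₙₐ[ℂ] B) : Prop :=
  (Submodule.span ℂ {x : B | ∃ l : List (ℕ × B), l ≠ [] ∧ (∀ p ∈ l, p.2 ∈ A) ∧
    x = prodOf (⇑α) l}).topologicalClosure = ⊤

/-- An `α`-expectation: a conditional expectation `E : B → A` satisfying the
equivariance axiom (E1) `E ∘ α = E ∘ α ∘ E` and (E2) multiplicativity on the
hereditary subalgebra `[ABA]`. -/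
def IsAlphaExpectation (A : NonUnitalStarSubalgebra ℂ B) (α : B →⋆ₙₐ[ℂ] B)
    (E : B →L[ℂ] B) : Prop :=
  IsCondExp A E ∧ (∀ x, E (α x) = E (α (E x))) ∧
    (∀ x ∈ hereditarySpan A, ∀ y ∈ hereditarySpan A, E (x * y) = E x * E y)

/-! Two properties of an `α`-expectation `E` drive the computation: `E ∘ α = φ ∘ E` on all of `B`,
by (E1), and `E (x * b * y) = E (x * b) * E y` for `b ∈ A`. For the latter, conjugating by an
approximate unit `e` of `A` puts `e * (x * b) * e` and `e * y * e` into `[ABA]`, where (E2)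
applies, and one lets `e → 1`. A word `α^{n₁}(a₁) ⋯ α^{n_k}(a_k)` is then evaluated by induction
on `∑ (nᵢ + 1)`: if every `nᵢ > 0` it is `α` of a smaller word and MP1 applies; otherwise it splits
at a letter `aᵢ ∈ A` and MP2 applies. Uniqueness follows because the words span a dense subspace
of `B`. -/

open Filter Topology

section ApproximateUnit

variable {R : Type*} [NonUnitalSeminormedRing R] {l : Filter R} {w : R → R} {c : R}

lemma tendsto_mul_left_of_isBoundedUnder (hl : IsBoundedUnder (· ≤ ·) l norm)
    (hw : Tendsto w l (𝓝 c)) (hc : Tendsto (· * c) l (𝓝 c)) :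
    Tendsto (fun e => e * w e) l (𝓝 c) := by
  have h := (isBoundedUnder_le_mul_tendsto_zero (f := id) hl
    (tendsto_sub_nhds_zero_iff.2 hw)).add hc
  simpa [mul_sub] using h

lemma tendsto_mul_right_of_isBoundedUnder (hl : IsBoundedUnder (· ≤ ·) l norm)
    (hw : Tendsto w l (𝓝 c)) (hc : Tendsto (c * ·) l (𝓝 c)) :
    Tendsto (fun e => w e * e) l (𝓝 c) := by
  have h := ((tendsto_sub_nhds_zero_iff.2 hw).zero_mul_isBoundedUnder_le (g := id) hl).add hc
  simpa [sub_mul] using h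

lemma NonUnitalStarSubalgebra.exists_approximateUnit {R : Type*} [NonUnitalCStarAlgebra R]
    (A : NonUnitalStarSubalgebra ℂ R) (hA : IsClosed (A : Set R)) :
    ∃ l : Filter R, l.NeBot ∧ (∀ᶠ e in l, e ∈ A ∧ ‖e‖ ≤ 1) ∧
      ∀ m ∈ A, Tendsto (· * m) l (𝓝 m) ∧ Tendsto (m * ·) l (𝓝 m) := by
  have : IsClosed (A : Set R) := hA
  -- `↥A` inherits no `StarOrderedRing` structure from `R`; the spectral order supplies one.
  let := CStarAlgebra.spectralOrder A
  have := CStarAlgebra.spectralOrderedRing A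
  have hl := CStarAlgebra.increasingApproximateUnit A
  refine ⟨(CStarAlgebra.approximateUnit A).map (↑), inferInstance, ?_, fun m hm => ⟨?_, ?_⟩⟩
  · exact eventually_map.2 (hl.eventually_norm.mono fun e he => ⟨e.2, he⟩)
  · exact (continuous_subtype_val.tendsto _).comp (hl.tendsto_mul_right ⟨m, hm⟩)
  · exact (continuous_subtype_val.tendsto _).comp (hl.tendsto_mul_left ⟨m, hm⟩)

end ApproximateUnit

section ProductsOfIterates

variable {R : Type*} [NonUnitalNormedRing R]

private lemma foldl_mul_iterate_mul (α : R → R) (x y : R) (l : List (ℕ × R)) :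
    l.foldl (fun acc q => acc * α^[q.1] q.2) (x * y) =
      x * l.foldl (fun acc q => acc * α^[q.1] q.2) y := by
  induction l generalizing y with
  | nil => rfl
  | cons q l ih => simp only [List.foldl_cons, mul_assoc, ih]

lemma prodOf_singleton (α : R → R) (p : ℕ × R) : prodOf α [p] = α^[p.1] p.2 := rfl

lemma prodOf_cons (α : R → R) (p : ℕ × R) {l : List (ℕ × R)} (hl : l ≠ []) :
    prodOf α (p :: l) = α^[p.1] p.2 * prodOf α l := by
  obtain ⟨q, l, rfl⟩ := List.exists_cons_of_ne_nil hl
  simp only [prodOf, List.foldl_cons]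
  exact foldl_mul_iterate_mul α _ _ l

lemma prodOf_append (α : R → R) {s t : List (ℕ × R)} (hs : s ≠ []) (ht : t ≠ []) :
    prodOf α (s ++ t) = prodOf α s * prodOf α t := by
  induction s with
  | nil => exact absurd rfl hs
  | cons p s ih =>
    rcases eq_or_ne s [] with rfl | hs'
    · exact prodOf_cons α p ht
    · rw [List.cons_append, prodOf_cons α p (by simp [hs']), ih hs', prodOf_cons α p hs',
        mul_assoc]

lemma prodOf_map_succ {F : Type*} [FunLike F R R] [MulHomClass F R R] (α : F)
    {l : List (ℕ × R)} (hl : l ≠ []) :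
    prodOf α (l.map fun p => (p.1 + 1, p.2)) = α (prodOf α l) := by
  induction l with
  | nil => exact absurd rfl hl
  | cons p l ih =>
    rcases eq_or_ne l [] with rfl | hl'
    · simp [prodOf_singleton, Function.iterate_succ_apply']
    · rw [List.map_cons, prodOf_cons _ _ (by simpa using hl'), ih hl', prodOf_cons _ p hl',
        map_mul, Function.iterate_succ_apply']

end ProductsOfIterates

lemma exists_eq_map_succ_fst {β : Type*} {l : List (ℕ × β)} (h : ∀ p ∈ l, p.1 ≠ 0) :
    ∃ l' : List (ℕ × β), l = l'.map fun p => (p.1 + 1, p.2) := by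
  induction l with
  | nil => exact ⟨[], rfl⟩
  | cons p l ih =>
    obtain ⟨l', rfl⟩ := ih fun q hq => h q (List.mem_cons_of_mem _ hq)
    obtain ⟨⟨k, a⟩, rfl⟩ : ∃ q : ℕ × β, p = (q.1 + 1, q.2) :=
      ⟨(p.1 - 1, p.2), by rw [Nat.sub_add_cancel (Nat.pos_of_ne_zero (h p (by simp)))]⟩
    exact ⟨(k, a) :: l', rfl⟩

/-- `M ns as` stands for the moment polynomial `[n₁,…,n_k; a₁,…,a_k]` with entries in `S`;
MP2 is split according to whether the vanishing exponent is first, last or interior. -/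
structure IsMomentPolynomials {R : Type*} [Mul R] (S : Set R) (φ : R → R)
    (M : List ℕ → List R → R) : Prop where
  map_succ : ∀ (ns : List ℕ) (as : List R), as.length = ns.length →
    (∀ a ∈ as, a ∈ S) → φ (M ns as) = M (ns.map (· + 1)) as
  singleton_zero : ∀ a ∈ S, M [0] [a] = a
  zero_cons : ∀ (ns : List ℕ) (a : R) (as : List R), ns ≠ [] →
    as.length = ns.length → a ∈ S → (∀ b ∈ as, b ∈ S) →
    M (0 :: ns) (a :: as) = a * M ns as
  append_zero : ∀ (ns : List ℕ) (a : R) (as : List R), ns ≠ [] →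
    as.length = ns.length → a ∈ S → (∀ b ∈ as, b ∈ S) →
    M (ns ++ [0]) (as ++ [a]) = M ns as * a
  append_zero_cons : ∀ (ns ms : List ℕ) (a : R) (as bs : List R), ns ≠ [] → ms ≠ [] →
    as.length = ns.length → bs.length = ms.length → a ∈ S →
    (∀ b ∈ as, b ∈ S) → (∀ b ∈ bs, b ∈ S) →
    M (ns ++ 0 :: ms) (as ++ a :: bs) = M ns as * a * M ms bs

section AlphaExpectation

variable {R : Type*} [NonUnitalNormedRing R] [StarRing R] [NormedSpace ℂ R]

lemma mul_mul_mem_hereditarySpan {A : NonUnitalStarSubalgebra ℂ R} {a b : R} (ha : a ∈ A)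
    (hb : b ∈ A) (x : R) : a * x * b ∈ hereditarySpan A :=
  subset_closure (Submodule.subset_span ⟨a, ha, b, hb, x, rfl⟩)

namespace IsAlphaExpectation

variable [PartialOrder R] {A : NonUnitalStarSubalgebra ℂ R} {α : R →⋆ₙₐ[ℂ] R} {E : R →L[ℂ] R}
  {φ : R → R} {M : List ℕ → List R → R}

lemma apply_mem (hE : IsAlphaExpectation A α E) (x : R) : E x ∈ A := hE.1.1 x

lemma apply_of_mem (hE : IsAlphaExpectation A α E) {a : R} (ha : a ∈ A) : E a = a :=
  hE.1.2.1 a ha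

lemma apply_mul_left (hE : IsAlphaExpectation A α E) {a : R} (ha : a ∈ A) (x : R) :
    E (a * x) = a * E x :=
  hE.1.2.2.2.1 a ha x

lemma apply_mul_right (hE : IsAlphaExpectation A α E) {a : R} (ha : a ∈ A) (x : R) :
    E (x * a) = E x * a :=
  hE.1.2.2.2.2 a ha x

lemma apply_alpha (hE : IsAlphaExpectation A α E) (hφ : ∀ a ∈ A, E (α a) = φ a)
    (x : R) : E (α x) = φ (E x) := by
  rw [hE.2.1, hφ _ (hE.apply_mem x)]

lemma apply_sandwich (hE : IsAlphaExpectation A α E) {e : R} (he : e ∈ A) (x : R) :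
    E (e * x * e) = e * E x * e := by
  rw [hE.apply_mul_right he, hE.apply_mul_left he]

lemma apply_prodOf_map_succ (hE : IsAlphaExpectation A α E) (hφ : ∀ a ∈ A, E (α a) = φ a)
    (hM : IsMomentPolynomials (A : Set R) φ M) {l : List (ℕ × R)} (hl : l ≠ [])
    (hlA : ∀ p ∈ l, p.2 ∈ A) (h : E (prodOf α l) = M (l.map Prod.fst) (l.map Prod.snd)) :
    E (prodOf α (l.map fun p => (p.1 + 1, p.2))) =
      M ((l.map fun p => (p.1 + 1, p.2)).map Prod.fst)
        ((l.map fun p => (p.1 + 1, p.2)).map Prod.snd) := by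
  rw [prodOf_map_succ α hl, hE.apply_alpha hφ, h,
    hM.map_succ _ _ (by simp) (List.forall_mem_map.2 hlA)]
  simp [Function.comp_def]

section CStarAlgebra

variable [CStarRing R] [IsScalarTower ℂ R R] [SMulCommClass ℂ R R] [StarModule ℂ R]
  [CompleteSpace R]

lemma apply_mul_mul_of_mem (hA : IsClosed (A : Set R)) (hE : IsAlphaExpectation A α E) {b : R} (hb : b ∈ A) (x y : R) :
    E (x * b * y) = E (x * b) * E y := by
  let : NonUnitalCStarAlgebra R := {}
  obtain ⟨l, _, hlA, hunit⟩ := A.exists_approximateUnit hA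
  have hbdd : IsBoundedUnder (· ≤ ·) l norm :=
    isBoundedUnder_of_eventually_le (hlA.mono fun _ he => he.2)
  have sandwich {w : R → R} {c : R} (hc : c ∈ A) (hw : Tendsto w l (𝓝 c)) :
      Tendsto (fun e => e * w e * e) l (𝓝 c) := by
    simp only [mul_assoc]
    exact tendsto_mul_left_of_isBoundedUnder hbdd
      (tendsto_mul_right_of_isBoundedUnder hbdd hw (hunit c hc).2) (hunit c hc).1
  have hbee : Tendsto (fun e => b * e * e) l (𝓝 b) :=
    tendsto_mul_right_of_isBoundedUnder hbdd (hunit b hb).2 (hunit b hb).2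
  have lhs : Tendsto (fun e => e * E (x * (b * e * e) * y) * e) l (𝓝 (E (x * b * y))) :=
    sandwich (hE.apply_mem _) ((E.continuous.tendsto _).comp
      ((tendsto_const_nhds.mul hbee).mul tendsto_const_nhds))
  have rhs : Tendsto (fun e => (e * E (x * b) * e) * (e * E y * e)) l
      (𝓝 (E (x * b) * E y)) :=
    (sandwich (hE.apply_mem _) tendsto_const_nhds).mul
      (sandwich (hE.apply_mem _) tendsto_const_nhds)
  refine tendsto_nhds_unique (lhs.congr' ?_) rhs
  filter_upwards [hlA] with e ⟨he, _⟩
  have key := hE.2.2 _ (mul_mul_mem_hereditarySpan he he (x * b))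
    _ (mul_mul_mem_hereditarySpan he he y)
  rwa [show e * (x * b) * e * (e * y * e) = e * (x * (b * e * e) * y) * e by noncomm_ring,
    hE.apply_sandwich he, hE.apply_sandwich he, hE.apply_sandwich he] at key

lemma apply_prodOf_append_zero_cons (hA : IsClosed (A : Set R))
    (hE : IsAlphaExpectation A α E) (hM : IsMomentPolynomials (A : Set R) φ M)
    {a : R} (ha : a ∈ A) {s t : List (ℕ × R)} (hsA : ∀ p ∈ s, p.2 ∈ A) (htA : ∀ p ∈ t, p.2 ∈ A)
    (hs : s ≠ [] → E (prodOf α s) = M (s.map Prod.fst) (s.map Prod.snd))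
    (ht : t ≠ [] → E (prodOf α t) = M (t.map Prod.fst) (t.map Prod.snd)) :
    E (prodOf α (s ++ (0, a) :: t)) =
      M ((s ++ (0, a) :: t).map Prod.fst) ((s ++ (0, a) :: t).map Prod.snd) := by
  have hsA' : ∀ b ∈ s.map Prod.snd, b ∈ A := List.forall_mem_map.2 hsA
  have htA' : ∀ b ∈ t.map Prod.snd, b ∈ A := List.forall_mem_map.2 htA
  rcases eq_or_ne s [] with rfl | hs0 <;> rcases eq_or_ne t [] with rfl | ht0
  · simp [prodOf_singleton, hE.apply_of_mem ha, hM.singleton_zero a ha]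
  · rw [List.nil_append, prodOf_cons _ _ ht0, Function.iterate_zero_apply,
      hE.apply_mul_left ha, ht ht0]
    simpa using (hM.zero_cons _ a _ (by simpa) (by simp) ha htA').symm
  · rw [prodOf_append _ hs0 (List.cons_ne_nil _ _), prodOf_singleton, Function.iterate_zero_apply,
      hE.apply_mul_right ha, hs hs0]
    simpa using (hM.append_zero _ a _ (by simpa) (by simp) ha hsA').symm
  · rw [prodOf_append _ hs0 (List.cons_ne_nil _ _), prodOf_cons _ _ ht0,
      Function.iterate_zero_apply, ← mul_assoc, hE.apply_mul_mul_of_mem hA ha,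
      hE.apply_mul_right ha, hs hs0, ht ht0]
    simpa using (hM.append_zero_cons _ _ a _ _ (by simpa) (by simpa) (by simp) (by simp) ha hsA'
      htA').symm

theorem apply_prodOf (hA : IsClosed (A : Set R))
    (hE : IsAlphaExpectation A α E) (hφ : ∀ a ∈ A, E (α a) = φ a)
    (hM : IsMomentPolynomials (A : Set R) φ M) {l : List (ℕ × R)} (hl : l ≠ [])
    (hlA : ∀ p ∈ l, p.2 ∈ A) : E (prodOf α l) = M (l.map Prod.fst) (l.map Prod.snd) := by
  induction hn : (l.map fun p => p.1 + 1).sum using Nat.strong_induction_on generalizing l with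
  | _ n ih =>
  by_cases hzero : ∃ p ∈ l, p.1 = 0
  · obtain ⟨⟨k, a⟩, hmem, rfl : k = 0⟩ := hzero
    obtain ⟨s, t, rfl⟩ := List.append_of_mem hmem
    simp only [List.forall_mem_append, List.forall_mem_cons] at hlA
    refine hE.apply_prodOf_append_zero_cons hA hM hlA.2.1 hlA.1 hlA.2.2
      (fun hs => ih _ ?_ hs hlA.1 rfl) (fun ht => ih _ ?_ ht hlA.2.2 rfl) <;>
    · simp only [← hn, List.map_append, List.map_cons, List.sum_append, List.sum_cons]
      omega
  · obtain ⟨l, rfl⟩ := exists_eq_map_succ_fst fun p hp h => hzero ⟨p, hp, h⟩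
    have hl0 : l ≠ [] := by simpa using hl
    have hlA' : ∀ p ∈ l, p.2 ∈ A := fun p hp => hlA (p.1 + 1, p.2) (List.mem_map_of_mem hp)
    refine hE.apply_prodOf_map_succ hφ hM hl0 hlA' (ih _ ?_ hl0 hlA' rfl)
    simp only [← hn, List.map_map, Function.comp_def, List.sum_map_add, List.map_const',
      List.sum_replicate, smul_eq_mul, mul_one]
    have := List.length_pos_of_ne_nil hl0
    omega

end CStarAlgebra

end IsAlphaExpectation

end AlphaExpectation

/-- Expectation values of an `α`-expectation are given by the moment polynomials:
`E(α^{n₁}(a₁) ⋯ α^{n_k}(a_k)) = [n₁,…,n_k; a₁,…,a_k]`, where `[·;·]` is any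
family satisfying the moment-polynomial axioms MP1, MP2 for `φ = E ∘ α` on `A`.
In particular there is at most one `α`-expectation compatible with `φ`. -/
theorem alphaExpectation_moment_values (A : NonUnitalStarSubalgebra ℂ B)
    (hA : IsClosed (A : Set B)) (α : B →⋆ₙₐ[ℂ] B) (hdyn : IsDynSystem A α)
    (E : B →L[ℂ] B) (hE : IsAlphaExpectation A α E)
    (φ : B → B) (hφ : ∀ a ∈ A, E (α a) = φ a)
    (M : List ℕ → List B → B)
    (hM1 : ∀ (ns : List ℕ) (as : List B), as.length = ns.length →
      (∀ a ∈ as, a ∈ A) → φ (M ns as) = M (ns.map (· + 1)) as)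
    (hM_single : ∀ a ∈ A, M [0] [a] = a)
    (hM_left : ∀ (ns : List ℕ) (a : B) (as : List B), ns ≠ [] →
      as.length = ns.length → a ∈ A → (∀ b ∈ as, b ∈ A) →
      M (0 :: ns) (a :: as) = a * M ns as)
    (hM_right : ∀ (ns : List ℕ) (a : B) (as : List B), ns ≠ [] →
      as.length = ns.length → a ∈ A → (∀ b ∈ as, b ∈ A) →
      M (ns ++ [0]) (as ++ [a]) = M ns as * a)
    (hM_mid : ∀ (ns ms : List ℕ) (a : B) (as bs : List B), ns ≠ [] → ms ≠ [] →
      as.length = ns.length → bs.length = ms.length → a ∈ A →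
      (∀ b ∈ as, b ∈ A) → (∀ b ∈ bs, b ∈ A) →
      M (ns ++ 0 :: ms) (as ++ a :: bs) = M ns as * a * M ms bs) :
    (∀ l : List (ℕ × B), l ≠ [] → (∀ p ∈ l, p.2 ∈ A) →
      E (prodOf (⇑α) l) = M (l.map Prod.fst) (l.map Prod.snd)) ∧
    ∀ E' : B →L[ℂ] B, IsAlphaExpectation A α E' →
      (∀ a ∈ A, E' (α a) = φ a) → E' = E := by
  have hM : IsMomentPolynomials (A : Set B) φ M := ⟨hM1, hM_single, hM_left, hM_right, hM_mid⟩
  refine ⟨fun l hl hlA => hE.apply_prodOf hA hφ hM hl hlA, fun E' hE' hφ' => ?_⟩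
  refine ContinuousLinearMap.ext_on (Submodule.dense_iff_topologicalClosure_eq_top.2 hdyn) ?_
  rintro _ ⟨l, hl, hlA, rfl⟩
  rw [hE'.apply_prodOf hA hφ' hM hl hlA, hE.apply_prodOf hA hφ hM hl hlA]
end

section
/- Let A ⊆ B be C*-algebras with A unital with unit e, α a *-endomorphism of B with α(e) ≥ e, and suppose φ(a) := eα(a)e defines a map A → A. Then eαⁿ(a)e = φⁿ(a) for all a ∈ A and n ≥ 0. -/
open scoped ComplexOrder

variable {B : Type*} [NonUnitalNormedRing B] [StarRing B] [CStarRing B]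
  [NormedSpace ℂ B] [IsScalarTower ℂ B B] [SMulCommClass ℂ B B] [StarModule ℂ B]
  [CompleteSpace B] [PartialOrder B] [StarOrderedRing B]

/-- If `A ⊆ B` has unit `e`, `α` is a `*`-endomorphism of `B` with `α(e) ≥ e`,
and `φ(a) := eα(a)e` maps `A` into `A`, then `eαⁿ(a)e = φⁿ(a)` for every
`a ∈ A` and `n ≥ 0`. -/
theorem compression_iterate (A : NonUnitalStarSubalgebra ℂ B)
    (hA : IsClosed (A : Set B)) (e : B) (he : e ∈ A) (heproj : e * e = e)
    (hesa : IsSelfAdjoint e) (hunit : ∀ a ∈ A, e * a = a ∧ a * e = a)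
    (α : B →⋆ₙₐ[ℂ] B) (hdom : e ≤ α e) (hφA : ∀ a ∈ A, e * α a * e ∈ A) :
    ∀ a ∈ A, ∀ n : ℕ,
      e * (⇑α)^[n] a * e = (fun x : B => e * α x * e)^[n] a := by
  set p := α e with hp
  have hpsa : IsSelfAdjoint p := by
    show star p = p
    rw [hp, ← map_star, hesa.star_eq]
  have hpp : p * p = p := by simpa [hp, ← map_mul] using congrArg α heproj
  -- Key step: p * e = e and e * p = e.
  have key : p * e = e := by
    have h1 : e ≤ e * p * e := by
      have := hesa.conjugate_le_conjugate hdom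
      calc e = e * e * e := by rw [heproj, heproj]
        _ ≤ e * p * e := this
    have hy : star (e - p * e) * (e - p * e) = e - e * p * e := by
      simp only [star_sub, star_mul, hesa.star_eq, hpsa.star_eq]
      rw [sub_mul, mul_sub, mul_sub, heproj]
      have h2 : e * p * (p * e) = e * p * e := by
        rw [mul_assoc, ← mul_assoc p p e, hpp, ← mul_assoc]
      rw [h2, ← mul_assoc]
      abel
    have hz : star (e - p * e) * (e - p * e) = 0 := by
      refine le_antisymm ?_ (star_mul_self_nonneg _)
      rw [hy]
      simpa using h1
    have h0 : e - p * e = 0 := (CStarRing.star_mul_self_eq_zero_iff _).mp hz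
    have := sub_eq_zero.mp h0
    exact this.symm
  have key' : e * p = e := by
    have := congrArg star key
    simpa [star_mul, hesa.star_eq, hpsa.star_eq] using this
  -- the compression identity: for every x, e α(e x e) e = e α(x) e
  have comp : ∀ x : B, e * α (e * x * e) * e = e * α x * e := by
    intro x
    rw [map_mul, map_mul, ← hp]
    calc e * (p * α x * p) * e = (e * p) * α x * (p * e) := by
          simp only [mul_assoc]
      _ = e * α x * e := by rw [key, key']
  intro a ha n
  induction n with
  | zero =>
    simp only [Function.iterate_zero, id]
    rw [(hunit a ha).1, (hunit a ha).2]
  | succ n ih =>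
    rw [Function.iterate_succ_apply', Function.iterate_succ_apply']
    show e * α ((⇑α)^[n] a) * e = e * α ((fun x : B => e * α x * e)^[n] a) * e
    rw [← ih, comp]
end
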